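/- arXiv:1707.09171 — 2 statements merged into one kernel-verified Lean document; each statement's English description precedes it below -/
import Mathlib

section
/- Let X be a two-dimensional real normed space with unit sphere S and 0 < ρ < 1. Suppose X satisfies property (P-ρS): whenever u, v ∈ S and inf_{t∈[0,1]} ‖(1−t)u + tv‖ = ρ, then ‖(1/2)u + (1/2)v‖ = ρ. Then X is strictly convex, i.e., for all distinct x, y ∈ S, ‖(x+y)/2‖ < 1. -/
open Real Set

/-- `N` is a norm on the two-dimensional real vector space `ℝ × ℝ`. -/
def IsNorm (N : ℝ × ℝ → ℝ) : Prop :=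
  (∀ x, N x = 0 ↔ x = 0) ∧ (∀ (a : ℝ) (x : ℝ × ℝ), N (a • x) = |a| * N x) ∧
    ∀ x y, N (x + y) ≤ N x + N y

/-- The 2D cross product `u ∧ v`; `u ≺ v` means `0 < wedge u v`. -/
def wedge (u v : ℝ × ℝ) : ℝ := u.1 * v.2 - u.2 * v.1

/-- `inf_{t ∈ [0,1]} N ((1−t)u + tv)`, the minimal `N`-norm on the segment `[u,v]`. -/
noncomputable def segInf (N : ℝ × ℝ → ℝ) (u v : ℝ × ℝ) : ℝ :=
  sInf ((fun t : ℝ => N ((1 - t) • u + t • v)) '' Icc (0:ℝ) 1)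

/-- Property (P-ρS): every chord of the unit sphere of `N` that supports `ρS`
touches `ρS` at its midpoint. -/
def PropP (N : ℝ × ℝ → ℝ) (ρ : ℝ) : Prop :=
  ∀ u v : ℝ × ℝ, N u = 1 → N v = 1 → segInf N u v = ρ →
    N ((1/2 : ℝ) • u + (1/2 : ℝ) • v) = ρ

/-!
Let `B = {N ≤ 1}`. Suppose `x ≠ y` lie on `S` together with their midpoint. Then some functional
`f₀` attains its maximum over `ρB` at both `ρx` and `ρy`; pick `g` with `g (y - x) = 1`. For
`θ ≠ 0` the line supporting `ρB` with normal `f₀ + θ g` cuts a chord from `S`; by (P-ρS) its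
midpoint lies on `ρS`, hence maximizes `f₀ + θ g` over `ρB`. As `θ → 0⁺` and as `θ → 0⁻` these
chords accumulate at chords of `S` on the line `f₀ = max`. That line passes through the interior
of `B`, so it meets `S` in only two points and both limits have the same midpoint `m`. The limit
`θ → 0⁺` gives `g m ≥ g (ρy)`, `g m ≥ g (ρx)`, the limit `θ → 0⁻` the reverse inequalities,
contradicting `g (ρy) - g (ρx) = ρ`.
-/

open Filter Topology

lemma ConvexOn.eq_of_apply_eq_of_mul_pos {ψ : ℝ → ℝ} {c a b : ℝ} (hψ : ConvexOn ℝ univ ψ)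
    (h0 : ψ 0 < c) (ha : ψ a = c) (hb : ψ b = c) (hab : 0 < a * b) : a = b := by
  wlog hlt : a < b generalizing a b
  · rcases (not_lt.mp hlt).lt_or_eq with h | h
    · exact (this hb ha (by linarith) h).symm
    · exact h.symm
  rcases lt_or_gt_of_ne (left_ne_zero_of_mul hab.ne') with ha0 | ha0
  · have hb0 : b < 0 := by nlinarith
    have := hψ.le_right_of_left_le (mem_univ a) (mem_univ 0) (Ioo_subset_openSegment ⟨hlt, hb0⟩)
      (by rw [ha, hb])
    linarith
  · have := hψ.le_left_of_right_le (mem_univ 0) (mem_univ b) (Ioo_subset_openSegment ⟨ha0, hlt⟩)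
      (by rw [ha, hb])
    linarith

lemma ConvexOn.add_eq_add_of_apply_eq {ψ : ℝ → ℝ} {c a b a' b' : ℝ} (hψ : ConvexOn ℝ univ ψ)
    (h0 : ψ 0 < c) (ha : ψ a = c) (hb : ψ b = c) (ha' : ψ a' = c) (hb' : ψ b' = c)
    (hab : a ≠ b) (hab' : a' ≠ b') : a + b = a' + b' := by
  have hsign : ∀ {s t}, ψ s = c → ψ t = c → s = t ∨ s * t < 0 := by
    intro s t hs ht
    rcases lt_trichotomy (s * t) 0 with h | h | h
    · exact Or.inr h
    · rcases mul_eq_zero.mp h with rfl | rfl <;> linarith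
    · exact Or.inl (hψ.eq_of_apply_eq_of_mul_pos h0 hs ht h)
  have hab0 := (hsign ha hb).resolve_left hab
  have hab0' := (hsign ha' hb').resolve_left hab'
  rcases hsign ha ha' with rfl | haa'
  · rcases hsign hb hb' with rfl | hbb'
    · rfl
    · nlinarith [mul_pos_of_neg_of_neg hab0 hab0', sq_nonneg a]
  · rcases hsign ha hb' with rfl | hab''
    · rcases hsign hb ha' with rfl | hba'
      · ring
      · nlinarith [mul_pos_of_neg_of_neg hab0 haa', sq_nonneg a]
    · nlinarith [mul_pos_of_neg_of_neg haa' hab'', sq_nonneg a]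

lemma exists_ker_generator {f : StrongDual ℝ (ℝ × ℝ)} (hf : f ≠ 0) :
    ∃ d : ℝ × ℝ, d ≠ 0 ∧ f d = 0 ∧ ∀ w, f w = 0 → ∃ t : ℝ, t • d = w := by
  have hf' : (f : Module.Dual ℝ (ℝ × ℝ)) ≠ 0 := fun h => hf (ContinuousLinearMap.coe_injective h)
  have hker : Module.finrank ℝ (LinearMap.ker (f : Module.Dual ℝ (ℝ × ℝ))) = 1 := by
    have := Module.Dual.finrank_ker_add_one_of_ne_zero hf'
    rw [Module.finrank_prod, Module.finrank_self] at this
    omega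
  obtain ⟨⟨d, hd⟩, hd0⟩ := Module.finrank_pos_iff_exists_ne_zero.mp (hker ▸ one_pos)
  refine ⟨d, fun h => hd0 (by simp [h]), hd, fun w hw => ?_⟩
  obtain ⟨t, ht⟩ := (finrank_eq_one_iff_of_nonzero' _ hd0).mp hker ⟨w, hw⟩
  exact ⟨t, congrArg Subtype.val ht⟩

namespace IsNorm

variable {N : ℝ × ℝ → ℝ}

lemma apply_zero (hN : IsNorm N) : N 0 = 0 := (hN.1 0).2 rfl

lemma add_le (hN : IsNorm N) (z w : ℝ × ℝ) : N (z + w) ≤ N z + N w := hN.2.2 z w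

lemma apply_neg (hN : IsNorm N) (z : ℝ × ℝ) : N (-z) = N z := by
  simpa using hN.2.1 (-1) z

lemma apply_smul_of_nonneg (hN : IsNorm N) {a : ℝ} (ha : 0 ≤ a) (z : ℝ × ℝ) :
    N (a • z) = a * N z := by
  rw [hN.2.1, abs_of_nonneg ha]

lemma apply_smul_of_apply_eq_one (hN : IsNorm N) {r : ℝ} (hr : 0 ≤ r) {z : ℝ × ℝ}
    (hz : N z = 1) : N (r • z) = r := by
  rw [hN.apply_smul_of_nonneg hr, hz, mul_one]

lemma apply_half_smul_add_le (hN : IsNorm N) (x y : ℝ × ℝ) :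
    N ((1/2 : ℝ) • (x + y)) ≤ (N x + N y) / 2 := by
  rw [hN.apply_smul_of_nonneg (by norm_num)]
  linarith [hN.add_le x y]

lemma nonneg (hN : IsNorm N) (z : ℝ × ℝ) : 0 ≤ N z := by
  have h := hN.add_le z (-z)
  rw [add_neg_cancel, hN.apply_zero, hN.apply_neg] at h
  linarith

lemma pos (hN : IsNorm N) {z : ℝ × ℝ} (hz : z ≠ 0) : 0 < N z :=
  (hN.nonneg z).lt_of_ne fun h => hz ((hN.1 z).1 h.symm)

lemma convexOn (hN : IsNorm N) : ConvexOn ℝ univ N := by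
  refine ⟨convex_univ, fun z _ w _ a b ha hb _ => ?_⟩
  calc N (a • z + b • w) ≤ N (a • z) + N (b • w) := hN.add_le _ _
    _ = a • N z + b • N w := by
      rw [hN.apply_smul_of_nonneg ha, hN.apply_smul_of_nonneg hb, smul_eq_mul, smul_eq_mul]

lemma convexOn_line (hN : IsNorm N) (q d : ℝ × ℝ) :
    ConvexOn ℝ univ (fun t : ℝ => N (q + t • d)) := by
  refine ⟨convex_univ, fun s _ t _ a b ha hb hab => ?_⟩
  have h : q + (a • s + b • t) • d = a • (q + s • d) + b • (q + t • d) := by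
    linear_combination (norm := module) -hab • q
  simp only [h]
  exact hN.convexOn.2 (mem_univ _) (mem_univ _) ha hb hab

lemma continuous (hN : IsNorm N) : Continuous N :=
  continuousOn_univ.mp (hN.convexOn.continuousOn isOpen_univ)

lemma exists_pos_mul_norm_le (hN : IsNorm N) : ∃ c : ℝ, 0 < c ∧ ∀ z, c * ‖z‖ ≤ N z := by
  obtain ⟨z₀, hz₀, hmin⟩ := (isCompact_sphere (0 : ℝ × ℝ) 1).exists_isMinOn
    (NormedSpace.sphere_nonempty.mpr zero_le_one) hN.continuous.continuousOn
  have hz₀' : z₀ ≠ 0 := ne_zero_of_mem_unit_sphere ⟨z₀, hz₀⟩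
  refine ⟨N z₀, hN.pos hz₀', fun z => ?_⟩
  rcases eq_or_ne z 0 with rfl | hz
  · simp [hN.apply_zero]
  have hnz : 0 < ‖z‖ := norm_pos_iff.mpr hz
  have h : N z₀ ≤ N (‖z‖⁻¹ • z) := hmin (by simp [norm_smul, hnz.ne'])
  rw [hN.apply_smul_of_nonneg (by positivity)] at h
  calc N z₀ * ‖z‖ ≤ ‖z‖⁻¹ * N z * ‖z‖ := by gcongr
    _ = N z := by field_simp

lemma isCompact_le (hN : IsNorm N) (r : ℝ) : IsCompact {z | N z ≤ r} := by
  obtain ⟨c, hc, hle⟩ := hN.exists_pos_mul_norm_le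
  refine Metric.isCompact_of_isClosed_isBounded (isClosed_le hN.continuous continuous_const)
    ((Metric.isBounded_closedBall (x := 0) (r := r / c)).subset fun z hz => ?_)
  rw [mem_closedBall_zero_iff, le_div_iff₀' hc]
  exact (hle z).trans hz

lemma exists_pos_add_smul_eq_one (hN : IsNorm N) {c v : ℝ × ℝ} (hc : N c < 1) (hv : v ≠ 0) :
    ∃ t : ℝ, 0 < t ∧ N (c + t • v) = 1 := by
  set T := (1 + N c) / N v
  have hT : 0 ≤ T := by have := hN.pos hv; have := hN.nonneg c; positivity
  have hgrow : 1 ≤ N (c + T • v) := by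
    have h := hN.add_le (c + T • v) (-c)
    rw [add_neg_cancel_comm, hN.apply_neg, hN.apply_smul_of_nonneg hT,
      div_mul_cancel₀ _ (hN.pos hv).ne'] at h
    linarith
  have hcont : Continuous fun t : ℝ => N (c + t • v) := hN.continuous.comp (by fun_prop)
  obtain ⟨t, ht, hNt⟩ := intermediate_value_Ioc hT hcont.continuousOn
    (by simpa using And.intro hc hgrow : (1 : ℝ) ∈ Ioc (N (c + (0 : ℝ) • v)) (N (c + T • v)))
  exact ⟨t, ht.1, hNt⟩

lemma exists_isMaxOn (hN : IsNorm N) {m : ℝ × ℝ} {r : ℝ} (hr : 0 < r) (hm : N m = r) :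
    ∃ f : StrongDual ℝ (ℝ × ℝ), 0 < f m ∧ IsMaxOn f {z | N z ≤ r} m := by
  have hopen : IsOpen {z | N z < r} := isOpen_lt hN.continuous continuous_const
  have hconv : Convex ℝ {z | N z < r} := by simpa using hN.convexOn.convex_lt r
  obtain ⟨f, hf⟩ := geometric_hahn_banach_open_point hconv hopen (x := m) (by simp [hm])
  refine ⟨f, by simpa using hf 0 (by simpa [hN.apply_zero] using hr), fun z (hz : N z ≤ r) => ?_⟩
  have hlim : Tendsto (fun t : ℝ => t * f z) (𝓝[<] 1) (𝓝 (f z)) := by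
    simpa using ((tendsto_id (x := 𝓝 (1 : ℝ))).mul_const (f z)).mono_left nhdsWithin_le_nhds
  refine le_of_tendsto hlim ?_
  filter_upwards [Ioo_mem_nhdsLT zero_lt_one] with t ht
  have hNt : N (t • z) < r := by
    rw [hN.apply_smul_of_nonneg ht.1.le]
    nlinarith [hN.nonneg z, ht.1, ht.2]
  simpa using (hf _ hNt).le

lemma apply_lt_of_isMaxOn (hN : IsNorm N) {f : StrongDual ℝ (ℝ × ℝ)} (hf : f ≠ 0) {ρ : ℝ}
    {c : ℝ × ℝ} (hc : IsMaxOn f {z | N z ≤ ρ} c) {z : ℝ × ℝ} (hz : N z < ρ) : f z < f c := by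
  obtain ⟨w, hw⟩ : ∃ w, 0 < f w := by
    obtain ⟨w, hw⟩ : ∃ w, f w ≠ 0 := by
      by_contra! h
      exact hf (ContinuousLinearMap.ext h)
    rcases hw.lt_or_gt with hw | hw
    · exact ⟨-w, by simpa using hw⟩
    · exact ⟨w, hw⟩
  have hNw : 0 < N w := hN.pos fun h => by simp [h] at hw
  set ε := (ρ - N z) / N w
  have hε : 0 < ε := div_pos (by linarith) hNw
  have hmem : N (z + ε • w) ≤ ρ := by
    have h := hN.add_le z (ε • w)
    rw [hN.apply_smul_of_nonneg hε.le, div_mul_cancel₀ _ hNw.ne'] at h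
    linarith
  have h : f (z + ε • w) ≤ f c := hc hmem
  rw [map_add, map_smul, smul_eq_mul] at h
  nlinarith

end IsNorm

/-- `[u, v]` is a chord of the unit sphere lying on a line `f = const` that supports the ball
`{N ≤ ρ}` at the midpoint of the chord. -/
def IsSupportingChord (N : ℝ × ℝ → ℝ) (ρ : ℝ) (f : StrongDual ℝ (ℝ × ℝ)) (u v : ℝ × ℝ) : Prop :=
  N u = 1 ∧ N v = 1 ∧ f u = f v ∧ N ((1/2 : ℝ) • u + (1/2 : ℝ) • v) = ρ ∧
    IsMaxOn f {z | N z ≤ ρ} ((1/2 : ℝ) • u + (1/2 : ℝ) • v)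

namespace IsSupportingChord

variable {N : ℝ × ℝ → ℝ} {ρ : ℝ} {f : StrongDual ℝ (ℝ × ℝ)} {u v : ℝ × ℝ}

lemma ne (h : IsSupportingChord N ρ f u v) (hρ1 : ρ < 1) : u ≠ v := by
  rintro rfl
  obtain ⟨hu, -, -, hmid, -⟩ := h
  rw [← add_smul, add_halves, one_smul, hu] at hmid
  linarith

lemma apply_left_eq (h : IsSupportingChord N ρ f u v) :
    f u = f ((1/2 : ℝ) • u + (1/2 : ℝ) • v) := by
  rw [map_add, map_smul, map_smul, ← h.2.2.1]
  module

lemma mul_le {f₀ g : StrongDual ℝ (ℝ × ℝ)} {θ : ℝ} (h : IsSupportingChord N ρ (f₀ + θ • g) u v)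
    {p : ℝ × ℝ} (hp : N p ≤ ρ) (hf₀p : IsMaxOn f₀ {z | N z ≤ ρ} p) :
    θ * g p ≤ θ * g ((1/2 : ℝ) • u + (1/2 : ℝ) • v) := by
  obtain ⟨-, -, -, hmid, hmax⟩ := h
  have h₁ := hmax hp
  have h₂ := hf₀p hmid.le
  simp only [mem_ofPred_eq, add_apply, smul_apply, smul_eq_mul] at h₁ h₂
  linarith

lemma add_eq_add (hN : IsNorm N) (hρ1 : ρ < 1) (hf : f ≠ 0) {u' v' : ℝ × ℝ}
    (h : IsSupportingChord N ρ f u v) (h' : IsSupportingChord N ρ f u' v') :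
    u + v = u' + v' := by
  have ⟨hu, hv, hfuv, hmid, hmax⟩ := h
  have ⟨hu', hv', hfuv', hmid', hmax'⟩ := h'
  set q := (1/2 : ℝ) • u + (1/2 : ℝ) • v
  obtain ⟨d, -, -, hker⟩ := exists_ker_generator hf
  have hline : ∀ w, f w = f q → ∃ t : ℝ, w = q + t • d := fun w hw => by
    obtain ⟨t, ht⟩ := hker (w - q) (by rw [map_sub, hw, sub_self])
    exact ⟨t, by rw [ht, add_sub_cancel]⟩
  have hfu' : f u' = f q :=
    h'.apply_left_eq.trans (le_antisymm (hmax hmid'.le) (hmax' hmid.le))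
  obtain ⟨a, ha⟩ := hline u h.apply_left_eq
  obtain ⟨b, hb⟩ := hline v (hfuv.symm.trans h.apply_left_eq)
  obtain ⟨a', ha'⟩ := hline u' hfu'
  obtain ⟨b', hb'⟩ := hline v' (hfuv'.symm.trans hfu')
  have hab : a + b = a' + b' := by
    have hq : N (q + (0 : ℝ) • d) < 1 := by
      rw [zero_smul, add_zero]
      exact hmid.trans_lt hρ1
    refine (hN.convexOn_line q d).add_eq_add_of_apply_eq hq
      (ha ▸ hu) (hb ▸ hv) (ha' ▸ hu') (hb' ▸ hv') ?_ ?_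
    · rintro rfl
      exact h.ne hρ1 (ha.trans hb.symm)
    · rintro rfl
      exact h'.ne hρ1 (ha'.trans hb'.symm)
  rw [ha, hb, ha', hb']
  calc q + a • d + (q + b • d) = (q + q) + (a + b) • d := by module
    _ = q + a' • d + (q + b' • d) := by rw [hab]; module

end IsSupportingChord

namespace IsNorm

variable {N : ℝ × ℝ → ℝ} {ρ : ℝ}

lemma exists_isSupportingChord (hN : IsNorm N) (hρ0 : 0 < ρ) (hρ1 : ρ < 1)
    (hP : PropP N ρ) {f : StrongDual ℝ (ℝ × ℝ)} (hf : f ≠ 0) :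
    ∃ u v, IsSupportingChord N ρ f u v := by
  obtain ⟨c, hc, hmax⟩ := (hN.isCompact_le ρ).exists_isMaxOn
    ⟨0, by simpa [hN.apply_zero] using hρ0.le⟩ f.continuous.continuousOn
  have hlt : ∀ z, N z < ρ → f z < f c := fun z => hN.apply_lt_of_isMaxOn hf hmax
  have hNc : N c = ρ := le_antisymm hc (not_lt.mp fun h => (hlt c h).false)
  obtain ⟨d, hd0, hfd, -⟩ := exists_ker_generator hf
  obtain ⟨t₁, ht₁, hu⟩ := hN.exists_pos_add_smul_eq_one (hNc ▸ hρ1) (neg_ne_zero.mpr hd0)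
  obtain ⟨t₂, ht₂, hv⟩ := hN.exists_pos_add_smul_eq_one (hNc ▸ hρ1) hd0
  set u := c + t₁ • -d
  set v := c + t₂ • d
  have hfline : ∀ a b : ℝ, a + b = 1 → f (a • u + b • v) = f c := by
    intro a b hab
    simp only [u, v, map_add, map_smul, map_neg, hfd, smul_eq_mul]
    linear_combination f c * hab
  have hseg : segInf N u v = ρ := by
    refine IsLeast.csInf_eq ⟨⟨t₁ / (t₁ + t₂), ⟨by positivity, ?_⟩, ?_⟩, ?_⟩
    · rw [div_le_one (by positivity)]
      linarith
    · convert hNc using 2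
      simp only [u, v]
      match_scalars <;> field_simp <;> ring
    · rintro _ ⟨s, -, rfl⟩
      exact not_lt.mp fun h => (hlt _ h).ne (hfline _ _ (sub_add_cancel 1 s))
  refine ⟨u, v, hu, hv, ?_, hP u v hu hv hseg, ?_⟩
  · simpa using (hfline 1 0 (add_zero 1)).trans (hfline 0 1 (zero_add 1)).symm
  · rw [isMaxOn_iff, hfline _ _ (add_halves 1)]
    exact hmax

lemma isClosed_setOf_isSupportingChord (hN : IsNorm N) (ρ : ℝ) :
    IsClosed {p : StrongDual ℝ (ℝ × ℝ) × (ℝ × ℝ) × (ℝ × ℝ) |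
      IsSupportingChord N ρ p.1 p.2.1 p.2.2} := by
  have hN' := hN.continuous
  simp only [IsSupportingChord, isMaxOn_iff, ofPred_and, ofPred_forall]
  refine (isClosed_eq (by fun_prop) continuous_const).inter <|
    (isClosed_eq (by fun_prop) continuous_const).inter <|
    (isClosed_eq (by fun_prop) (by fun_prop)).inter <|
    (isClosed_eq (by fun_prop) continuous_const).inter <|
    isClosed_iInter fun z => isClosed_iInter fun _ => isClosed_le (by fun_prop) (by fun_prop)

lemma exists_isSupportingChord_of_tendsto (hN : IsNorm N) {C : Set ((ℝ × ℝ) × (ℝ × ℝ))}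
    (hC : IsClosed C) {f : ℕ → StrongDual ℝ (ℝ × ℝ)} {f₀ : StrongDual ℝ (ℝ × ℝ)}
    (hf : Tendsto f atTop (𝓝 f₀)) {u v : ℕ → ℝ × ℝ}
    (h : ∀ k, IsSupportingChord N ρ (f k) (u k) (v k) ∧ (u k, v k) ∈ C) :
    ∃ l₁ l₂, IsSupportingChord N ρ f₀ l₁ l₂ ∧ (l₁, l₂) ∈ C := by
  obtain ⟨l, -, φ, hφ, hlim⟩ := ((hN.isCompact_le 1).prod (hN.isCompact_le 1)).tendsto_subseq
    (x := fun k => (u k, v k)) fun k => ⟨(h k).1.1.le, (h k).1.2.1.le⟩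
  have hlim' : Tendsto (fun k => (f (φ k), u (φ k), v (φ k))) atTop (𝓝 (f₀, l.1, l.2)) :=
    (hf.comp hφ.tendsto_atTop).prodMk_nhds hlim
  exact ⟨l.1, l.2,
    (hN.isClosed_setOf_isSupportingChord ρ).mem_of_tendsto hlim' (.of_forall fun k => (h (φ k)).1),
    hC.mem_of_tendsto hlim (.of_forall fun k => (h (φ k)).2)⟩

lemma exists_isSupportingChord_mul_le (hN : IsNorm N) (hρ0 : 0 < ρ) (hρ1 : ρ < 1)
    (hP : PropP N ρ) {f₀ g : StrongDual ℝ (ℝ × ℝ)} {d : ℝ × ℝ} (hf₀d : f₀ d = 0) (hgd : g d ≠ 0)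
    {σ : ℝ} (hσ : σ ≠ 0) :
    ∃ l₁ l₂, IsSupportingChord N ρ f₀ l₁ l₂ ∧ ∀ p, N p ≤ ρ → IsMaxOn f₀ {z | N z ≤ ρ} p →
      σ * g p ≤ σ * g ((1/2 : ℝ) • l₁ + (1/2 : ℝ) • l₂) := by
  set θ : ℕ → ℝ := fun k => σ / (k + 1)
  have hθ : Tendsto θ atTop (𝓝 0) := by
    simpa [θ, div_eq_mul_inv] using tendsto_one_div_add_atTop_nhds_zero_nat.const_mul σ
  have hne : ∀ k, f₀ + θ k • g ≠ 0 := fun k h => by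
    have := congrArg (fun f : StrongDual ℝ (ℝ × ℝ) => f d) h
    simp only [add_apply, smul_apply, hf₀d, smul_eq_mul, zero_add, zero_apply] at this
    exact mul_ne_zero (div_ne_zero hσ (by positivity)) hgd this
  choose u v huv using fun k => hN.exists_isSupportingChord hρ0 hρ1 hP (hne k)
  have hC : IsClosed {w : (ℝ × ℝ) × (ℝ × ℝ) | ∀ p, N p ≤ ρ → IsMaxOn f₀ {z | N z ≤ ρ} p →
      σ * g p ≤ σ * g ((1/2 : ℝ) • w.1 + (1/2 : ℝ) • w.2)} := by
    simp only [ofPred_forall]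
    exact isClosed_iInter fun p => isClosed_iInter fun _ => isClosed_iInter fun _ =>
      isClosed_le continuous_const (by fun_prop)
  have hlim : Tendsto (fun k => f₀ + θ k • g) atTop (𝓝 f₀) := by
    simpa using tendsto_const_nhds.add (hθ.smul_const g)
  refine hN.exists_isSupportingChord_of_tendsto hC hlim fun k => ⟨huv k, fun p hp hmax => ?_⟩
  have hk : θ k * (k + 1) = σ := div_mul_cancel₀ σ (by positivity)
  have h := (huv k).mul_le hp hmax
  rw [← hk, mul_comm (θ k), mul_assoc, mul_assoc]
  exact mul_le_mul_of_nonneg_left h (by positivity)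

lemma exists_isMaxOn_smul_of_midpoint (hN : IsNorm N) (hρ0 : 0 < ρ) {x y : ℝ × ℝ}
    (hx : N x = 1) (hy : N y = 1) (hm : N ((1/2 : ℝ) • (x + y)) = 1) :
    ∃ f : StrongDual ℝ (ℝ × ℝ), f ≠ 0 ∧ f (y - x) = 0 ∧
      IsMaxOn f {z | N z ≤ ρ} (ρ • x) ∧ IsMaxOn f {z | N z ≤ ρ} (ρ • y) := by
  set m := ρ • (1/2 : ℝ) • (x + y)
  obtain ⟨f, hpos, hmax⟩ := hN.exists_isMaxOn hρ0 (hN.apply_smul_of_apply_eq_one hρ0.le hm)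
  rw [isMaxOn_iff] at hmax
  have hxm := hmax _ (hN.apply_smul_of_apply_eq_one hρ0.le hx).le
  have hym := hmax _ (hN.apply_smul_of_apply_eq_one hρ0.le hy).le
  have hsum : f m = (f (ρ • x) + f (ρ • y)) / 2 := by
    simp only [m, map_smul, map_add, smul_eq_mul]
    ring
  have hfx : f (ρ • x) = f m := by linarith
  have hfy : f (ρ • y) = f m := by linarith
  have hfd : f (y - x) = 0 := by
    have h := hfy.trans hfx.symm
    rw [map_smul, map_smul, smul_eq_mul, smul_eq_mul] at h
    rw [map_sub, mul_left_cancel₀ hρ0.ne' h, sub_self]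
  exact ⟨f, fun h => by simp [h] at hpos, hfd, isMaxOn_iff.mpr fun z hz => hfx ▸ hmax z hz,
    isMaxOn_iff.mpr fun z hz => hfy ▸ hmax z hz⟩

end IsNorm

/-- (P-ρS) implies strict convexity. -/
theorem stmt_3 (N : ℝ × ℝ → ℝ) (hN : IsNorm N) (ρ : ℝ) (hρ0 : 0 < ρ) (hρ1 : ρ < 1)
    (hP : PropP N ρ) :
    ∀ x y : ℝ × ℝ, N x = 1 → N y = 1 → x ≠ y → N ((1/2 : ℝ) • (x + y)) < 1 := by
  intro x y hx hy hxy
  by_contra! hlt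
  have hm : N ((1/2 : ℝ) • (x + y)) = 1 :=
    le_antisymm (by linarith [hN.apply_half_smul_add_le x y]) hlt
  obtain ⟨f, hf, hfd, hmaxx, hmaxy⟩ := hN.exists_isMaxOn_smul_of_midpoint hρ0 hx hy hm
  obtain ⟨g, hg⟩ := SeparatingDual.exists_eq_one (R := ℝ) (sub_ne_zero.mpr hxy.symm)
  obtain ⟨u₁, v₁, h₁, hg₁⟩ :=
    hN.exists_isSupportingChord_mul_le hρ0 hρ1 hP hfd (hg ▸ one_ne_zero) one_ne_zero
  obtain ⟨u₂, v₂, h₂, hg₂⟩ :=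
    hN.exists_isSupportingChord_mul_le hρ0 hρ1 hP hfd (hg ▸ one_ne_zero) (neg_ne_zero.2 one_ne_zero)
  have hmid : (1/2 : ℝ) • u₁ + (1/2 : ℝ) • v₁ = (1/2 : ℝ) • u₂ + (1/2 : ℝ) • v₂ := by
    rw [← smul_add, ← smul_add, h₁.add_eq_add hN hρ1 hf h₂]
  have hx₁ := hg₁ _ (hN.apply_smul_of_apply_eq_one hρ0.le hx).le hmaxx
  have hy₁ := hg₁ _ (hN.apply_smul_of_apply_eq_one hρ0.le hy).le hmaxy
  have hx₂ := hg₂ _ (hN.apply_smul_of_apply_eq_one hρ0.le hx).le hmaxx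
  have hy₂ := hg₂ _ (hN.apply_smul_of_apply_eq_one hρ0.le hy).le hmaxy
  have hgρ : g (ρ • y) - g (ρ • x) = ρ := by
    rw [← map_sub, ← smul_sub, map_smul, hg, smul_eq_mul, mul_one]
  rw [hmid] at hx₁ hy₁
  linarith
end

section
/- Let X be a two-dimensional real normed space with unit sphere S, 0 < ρ < 1, and u ∈ S such that the ρ-polygon P_u is finite with an odd number n of vertices (u_{n+1} = u₁ with n minimal, n odd). Then P_u and P_{−u} = −P_u are disjoint: no vertex of P_u equals the negative of a vertex of P_u. -/
/-!
Symmetry of the unit sphere and uniqueness of the successor give `(-x)* = -(x*)`, so the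
vertex map commutes with `x ↦ -x` along `P_u`. If `u_i = -u_j`, going on around the polygon
yields an exponent `c` with `u_{1+c} = -u`, hence `u_{1+2c} = u`. The period `n` then divides
`2c`, and since `n` is odd it divides `c`, forcing `u = -u`, impossible on the unit sphere.
-/

open Real Set

open Function

namespace Function

variable {α : Type*} {f σ : α → α} {s : Set α}

theorem minimalPeriod_eq_of_forall_lt_ne {x : α} {n : ℕ} (hn : 0 < n) (hper : f^[n] x = x)
    (hmin : ∀ m : ℕ, 0 < m → m < n → f^[m] x ≠ x) : minimalPeriod f x = n := by
  have hx : IsPeriodicPt f n x := hper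
  refine (hx.minimalPeriod_le hn).antisymm ?_
  by_contra! hlt
  exact hmin _ (hx.minimalPeriod_pos hn) hlt iterate_minimalPeriod

theorem iterate_apply_comm_of_mapsTo (hf : MapsTo f s s) (hcomm : ∀ x ∈ s, f (σ x) = σ (f x))
    (k : ℕ) : ∀ x ∈ s, f^[k] (σ x) = σ (f^[k] x) := by
  induction k with
  | zero => simp
  | succ k ih =>
    intro x hx
    rw [iterate_succ_apply, iterate_succ_apply, hcomm x hx, ih _ (hf hx)]

theorem iterate_ne_apply_iterate_of_odd_minimalPeriod (hf : MapsTo f s s)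
    (hcomm : ∀ x ∈ s, f (σ x) = σ (f x)) (hσ : Involutive σ) {x : α} (hx : x ∈ s)
    (hσx : σ x ≠ x) (hodd : Odd (minimalPeriod f x)) (i j : ℕ) :
    f^[i] x ≠ σ (f^[j] x) := by
  intro hij
  set n := minimalPeriod f x
  have comm := iterate_apply_comm_of_mapsTo hf hcomm
  set c := (n - 1) * j + i
  have hc : f^[c] x = σ x := by
    have hnj : (n - 1) * j + j = n * j := by
      rw [← Nat.succ_mul, Nat.succ_eq_add_one, Nat.sub_add_cancel hodd.pos]
    rw [iterate_add_apply, hij, comm _ _ (hf.iterate j hx), ← iterate_add_apply, hnj,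
      ((isPeriodicPt_minimalPeriod f x).mul_const j).eq]
  have h2c : IsPeriodicPt f (2 * c) x := by
    rw [IsPeriodicPt, IsFixedPt, two_mul, iterate_add_apply, hc, comm _ _ hx, hc, hσ x]
  have hnc : n ∣ c := hodd.coprime_two_right.dvd_of_dvd_mul_left h2c.minimalPeriod_dvd
  exact hσx (hc.symm.trans (isPeriodicPt_iff_minimalPeriod_dvd.mpr hnc).eq)

end Function

namespace IsNorm

variable {N : ℝ × ℝ → ℝ}

theorem map_neg (hN : IsNorm N) (x : ℝ × ℝ) : N (-x) = N x := by
  simpa using hN.2.1 (-1) x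

theorem ne_zero_of_eq_one (hN : IsNorm N) {x : ℝ × ℝ} (hx : N x = 1) : x ≠ 0 := by
  rintro rfl
  simp [(hN.1 0).2 rfl] at hx

end IsNorm

theorem wedge_neg_neg (u v : ℝ × ℝ) : wedge (-u) (-v) = wedge u v := by
  simp [wedge]

theorem segInf_neg_neg {N : ℝ × ℝ → ℝ} (hN : IsNorm N) (u v : ℝ × ℝ) :
    segInf N (-u) (-v) = segInf N u v := by
  refine congrArg sInf (image_congr fun t _ => ?_)
  rw [show (1 - t) • -u + t • -v = -((1 - t) • u + t • v) by module, hN.map_neg]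

/-- `star` sends each point `u` of the unit sphere to its successor `u*`: the unique point `w`
of the sphere with `u ≺ w` whose chord `[u, w]` supports `ρS`. -/
def IsSuccessorMap (N : ℝ × ℝ → ℝ) (ρ : ℝ) (star : ℝ × ℝ → ℝ × ℝ) : Prop :=
  ∀ u : ℝ × ℝ, N u = 1 →
    (N (star u) = 1 ∧ 0 < wedge u (star u) ∧ segInf N u (star u) = ρ) ∧
    ∀ w : ℝ × ℝ, N w = 1 → 0 < wedge u w → segInf N u w = ρ → w = star u

theorem IsSuccessorMap.map_neg {N : ℝ × ℝ → ℝ} {ρ : ℝ} {star : ℝ × ℝ → ℝ × ℝ}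
    (hN : IsNorm N) (hstar : IsSuccessorMap N ρ star) {x : ℝ × ℝ} (hx : N x = 1) :
    star (-x) = -star x := by
  obtain ⟨⟨hsx, hwedge, hseg⟩, -⟩ := hstar x hx
  refine ((hstar (-x) (by rwa [hN.map_neg])).2 _ (by rwa [hN.map_neg]) ?_ ?_).symm
  · rwa [wedge_neg_neg]
  · rwa [segInf_neg_neg hN]

theorem stmt_11_general (N : ℝ × ℝ → ℝ) (hN : IsNorm N) (ρ : ℝ)
    (star : ℝ × ℝ → ℝ × ℝ)
    (hstar : ∀ u : ℝ × ℝ, N u = 1 →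
      (N (star u) = 1 ∧ 0 < wedge u (star u) ∧ segInf N u (star u) = ρ) ∧
      ∀ w : ℝ × ℝ, N w = 1 → 0 < wedge u w → segInf N u w = ρ → w = star u)
    (u : ℝ × ℝ) (hu : N u = 1) (n : ℕ) (hodd : Odd n)
    (hper : star^[n] u = u) (hmin : ∀ m : ℕ, 0 < m → m < n → star^[m] u ≠ u) :
    ∀ i j : ℕ, star^[i] u ≠ -(star^[j] u) := by
  have hperiod : minimalPeriod star u = n := minimalPeriod_eq_of_forall_lt_ne hodd.pos hper hmin
  have hmaps : MapsTo star {x | N x = 1} {x | N x = 1} := fun x hx => (hstar x hx).1.1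
  exact iterate_ne_apply_iterate_of_odd_minimalPeriod (σ := Neg.neg) hmaps
    (fun _ hx => IsSuccessorMap.map_neg hN hstar hx) neg_involutive hu
    (neg_ne_self.mpr (hN.ne_zero_of_eq_one hu)) (hperiod ▸ hodd)

/-- If the ρ-polygon `P_u` is finite with an odd number `n` of vertices
(`n` the minimal period of `u` under the successor map), then `P_u ∩ (−P_u) = ∅`:
no vertex of `P_u` is the negative of a vertex of `P_u`. -/
theorem stmt_11 (N : ℝ × ℝ → ℝ) (hN : IsNorm N) (ρ : ℝ) (hρ0 : 0 < ρ) (hρ1 : ρ < 1)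
    (star : ℝ × ℝ → ℝ × ℝ)
    (hstar : ∀ u : ℝ × ℝ, N u = 1 →
      (N (star u) = 1 ∧ 0 < wedge u (star u) ∧ segInf N u (star u) = ρ) ∧
      ∀ w : ℝ × ℝ, N w = 1 → 0 < wedge u w → segInf N u w = ρ → w = star u)
    (u : ℝ × ℝ) (hu : N u = 1) (n : ℕ) (hn : 0 < n) (hodd : Odd n)
    (hper : star^[n] u = u) (hmin : ∀ m : ℕ, 0 < m → m < n → star^[m] u ≠ u) :
    ∀ i j : ℕ, star^[i] u ≠ -(star^[j] u) :=
  stmt_11_general N hN ρ star hstar u hu n hodd hper hmin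
end
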